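/- Geometric measure of isotropic states: let d ≥ 2, |Ψ_0⟩ = (1/√d) Σ_{j=0}^{d−1} |j⟩ ⊗ |j⟩, and for 1/d² ≤ λ ≤ 1 let ρ_{I,λ} = ((1−λ)/(d²−1))(I − |Ψ_0⟩⟨Ψ_0|) + λ|Ψ_0⟩⟨Ψ_0| be the isotropic state on ℂ^d ⊗ ℂ^d. Then Λ²(ρ_{I,λ}) = (λd + 1)/(d(d + 1)), i.e., G(ρ_{I,λ}) = log₂( d(d+1)/(λd+1) ), and each vector |j⟩ ⊗ |j⟩ is a maximizing product vector. -/

import Mathlib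

open scoped BigOperators ComplexOrder

namespace Paper

/-- `a` is an ℓ²-normalized (unit) vector. -/
def IsUnitVec {n : Type*} [Fintype n] (a : n → ℂ) : Prop :=
  ∑ x, ‖a x‖ ^ 2 = 1

/-- A density matrix: positive semidefinite with trace 1. -/
def IsDensityMatrix {n : Type*} [Fintype n] (ρ : Matrix n n ℂ) : Prop :=
  ρ.PosSemidef ∧ ρ.trace = 1

/-- ⟨φ|ρ|φ⟩ (its real part). -/
noncomputable def overlap {n : Type*} [Fintype n] (ρ : Matrix n n ℂ) (φ : n → ℂ) : ℝ :=
  (dotProduct (star φ) (ρ.mulVec φ)).re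

/-- The bipartite product vector a ⊗ b. -/
def biProd {α β : Type*} (a : α → ℂ) (b : β → ℂ) : α × β → ℂ :=
  fun p => a p.1 * b p.2

/-- Λ²(ρ) for a bipartite state: maximal overlap with product vectors. -/
noncomputable def biMaxOverlap {α β : Type*} [Fintype α] [Fintype β]
    (ρ : Matrix (α × β) (α × β) ℂ) : ℝ :=
  sSup {r : ℝ | ∃ (a : α → ℂ) (b : β → ℂ), IsUnitVec a ∧ IsUnitVec b ∧
    r = overlap ρ (biProd a b)}

/-- The geometric measure G(ρ) = −log₂ Λ²(ρ) of a bipartite state. -/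
noncomputable def biGm {α β : Type*} [Fintype α] [Fintype β]
    (ρ : Matrix (α × β) (α × β) ℂ) : ℝ :=
  -Real.logb 2 (biMaxOverlap ρ)

/-- The outer product |ψ⟩⟨ψ|. -/
def outer {n : Type*} (ψ : n → ℂ) : Matrix n n ℂ :=
  fun i i' => ψ i * starRingEnd ℂ (ψ i')

/-- The standard basis vector |x⟩. -/
def basisVec {n : Type*} [DecidableEq n] (x : n) : n → ℂ :=
  fun y => if y = x then 1 else 0

/-- The maximally entangled state |Ψ₀⟩ = (1/√d) Σ_j |j⟩⊗|j⟩. -/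
noncomputable def maxEntVec (d : ℕ) : Fin d × Fin d → ℂ := fun p =>
  if p.1 = p.2 then ((1 / Real.sqrt d : ℝ) : ℂ) else 0

/-- The isotropic state ρ_{I,λ} = ((1−λ)/(d²−1))(I − |Ψ₀⟩⟨Ψ₀|) + λ|Ψ₀⟩⟨Ψ₀|. -/
noncomputable def isotropic (d : ℕ) (lam : ℝ) : Matrix (Fin d × Fin d) (Fin d × Fin d) ℂ :=
  (((1 - lam) / ((d : ℝ) ^ 2 - 1) : ℝ) : ℂ) • ((1 : Matrix (Fin d × Fin d) (Fin d × Fin d) ℂ)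
      - outer (maxEntVec d))
    + ((lam : ℝ) : ℂ) • outer (maxEntVec d)


lemma dot_one {n : Type*} [Fintype n] [DecidableEq n] (φ : n → ℂ) :
    dotProduct (star φ) ((1 : Matrix n n ℂ).mulVec φ) = ((∑ x, ‖φ x‖ ^ 2 : ℝ) : ℂ) := by
  rw [Matrix.one_mulVec]
  unfold dotProduct
  push_cast
  refine Finset.sum_congr rfl fun x _ => ?_
  simp only [Pi.star_apply]
  rw [show (star (φ x) : ℂ) = (starRingEnd ℂ) (φ x) from rfl, mul_comm]
  exact Complex.mul_conj' _

lemma dot_outer {n : Type*} [Fintype n] (ψ φ : n → ℂ) :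
    dotProduct (star φ) ((outer ψ).mulVec φ)
      = ((‖∑ x, starRingEnd ℂ (ψ x) * φ x‖ ^ 2 : ℝ) : ℂ) := by
  have h1 : ∀ i, (outer ψ).mulVec φ i = ψ i * ∑ x, starRingEnd ℂ (ψ x) * φ x := by
    intro i
    simp only [Matrix.mulVec, dotProduct, outer, Finset.mul_sum]
    exact Finset.sum_congr rfl fun x _ => by ring
  set t : ℂ := ∑ x, starRingEnd ℂ (ψ x) * φ x with ht
  have h2 : dotProduct (star φ) ((outer ψ).mulVec φ)
      = (∑ i, starRingEnd ℂ (φ i) * ψ i) * t := by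
    simp only [dotProduct, h1, Pi.star_apply, Finset.sum_mul]
    exact Finset.sum_congr rfl fun i _ => by rw [mul_assoc]; rfl
  have h3 : (∑ i, starRingEnd ℂ (φ i) * ψ i) = starRingEnd ℂ t := by
    rw [ht, map_sum]
    exact Finset.sum_congr rfl fun i _ => by rw [map_mul, RingHomInvPair.comp_apply_eq₂, mul_comm]
  rw [h2, h3]
  push_cast
  rw [mul_comm]
  exact Complex.mul_conj' _

lemma maxEnt_dot {d : ℕ} (a b : Fin d → ℂ) :
    ∑ p : Fin d × Fin d, starRingEnd ℂ (maxEntVec d p) * biProd a b p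
      = ((1 / Real.sqrt d : ℝ) : ℂ) * ∑ j, a j * b j := by
  rw [Fintype.sum_prod_type, Finset.mul_sum]
  refine Finset.sum_congr rfl fun i _ => ?_
  simp [maxEntVec, biProd, apply_ite (starRingEnd ℂ), ite_mul, Complex.conj_ofReal,
    Finset.sum_ite_eq, mul_assoc]

lemma norm_prod_sum {d : ℕ} (a b : Fin d → ℂ) :
    ∑ p : Fin d × Fin d, ‖biProd a b p‖ ^ 2 = (∑ x, ‖a x‖ ^ 2) * (∑ x, ‖b x‖ ^ 2) := by
  rw [Fintype.sum_prod_type, Finset.sum_mul_sum]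
  refine Finset.sum_congr rfl fun i _ => Finset.sum_congr rfl fun j _ => ?_
  simp [biProd, norm_mul, mul_pow]

lemma norm_scaled {d : ℕ} (hd : 1 ≤ d) (S : ℂ) :
    ‖((1 / Real.sqrt d : ℝ) : ℂ) * S‖ ^ 2 = ‖S‖ ^ 2 / d := by
  have hd0 : (0:ℝ) < d := by exact_mod_cast hd
  rw [norm_mul, Complex.norm_real, mul_pow, Real.norm_eq_abs,
    abs_of_nonneg (by positivity), div_pow, one_pow, Real.sq_sqrt hd0.le]
  ring

/-- Overlap formula for the isotropic state against a product vector. -/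
lemma overlap_iso {d : ℕ} (hd : 1 ≤ d) (lam : ℝ) (a b : Fin d → ℂ) :
    overlap (isotropic d lam) (biProd a b)
      = ((1 - lam) / ((d : ℝ) ^ 2 - 1))
          * ((∑ x, ‖a x‖ ^ 2) * (∑ x, ‖b x‖ ^ 2) - ‖∑ j, a j * b j‖ ^ 2 / d)
        + lam * (‖∑ j, a j * b j‖ ^ 2 / d) := by
  set c : ℝ := (1 - lam) / ((d : ℝ) ^ 2 - 1) with hc
  set φ : Fin d × Fin d → ℂ := biProd a b with hφ
  have key : dotProduct (star φ) ((isotropic d lam).mulVec φ)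
      = (c : ℂ) * (((∑ x, ‖φ x‖ ^ 2 : ℝ) : ℂ) - ((‖∑ j, a j * b j‖ ^ 2 / d : ℝ) : ℂ))
        + (lam : ℂ) * ((‖∑ j, a j * b j‖ ^ 2 / d : ℝ) : ℂ) := by
    rw [isotropic, Matrix.add_mulVec, Matrix.smul_mulVec, Matrix.smul_mulVec,
      Matrix.sub_mulVec, dotProduct_add, dotProduct_smul, dotProduct_smul,
      dotProduct_sub, dot_one, dot_outer, smul_eq_mul, smul_eq_mul]
    rw [maxEnt_dot, norm_scaled hd]
  have hN : ∑ x, ‖φ x‖ ^ 2 = (∑ x, ‖a x‖ ^ 2) * (∑ x, ‖b x‖ ^ 2) := norm_prod_sum a b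
  rw [overlap, key, hN]
  have : ((c : ℂ) * ((((∑ x, ‖a x‖ ^ 2) * (∑ x, ‖b x‖ ^ 2) : ℝ) : ℂ)
        - ((‖∑ j, a j * b j‖ ^ 2 / d : ℝ) : ℂ))
        + (lam : ℂ) * ((‖∑ j, a j * b j‖ ^ 2 / d : ℝ) : ℂ))
      = ((c * ((∑ x, ‖a x‖ ^ 2) * (∑ x, ‖b x‖ ^ 2) - ‖∑ j, a j * b j‖ ^ 2 / d)
        + lam * (‖∑ j, a j * b j‖ ^ 2 / d) : ℝ) : ℂ) := by
    push_cast; ring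
  rw [this, Complex.ofReal_re]

lemma basis_unit {d : ℕ} (j : Fin d) : IsUnitVec (basisVec j) := by
  simp [IsUnitVec, basisVec, apply_ite norm]

/-- **Geometric measure of isotropic states.** For d ≥ 2 and 1/d² ≤ λ ≤ 1,
Λ²(ρ_{I,λ}) = (λd + 1)/(d(d+1)), i.e. G(ρ_{I,λ}) = log₂( d(d+1)/(λd+1) ), and each
|j⟩⊗|j⟩ is a maximizing product vector. -/
theorem gm_isotropic {d : ℕ} (hd : 2 ≤ d) (lam : ℝ)
    (hl : 1 / (d : ℝ) ^ 2 ≤ lam) (hu : lam ≤ 1) :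
    biMaxOverlap (isotropic d lam) = (lam * d + 1) / ((d : ℝ) * (d + 1)) ∧
    (∀ j : Fin d, overlap (isotropic d lam) (biProd (basisVec j) (basisVec j))
      = (lam * d + 1) / ((d : ℝ) * (d + 1))) ∧
    biGm (isotropic d lam) = Real.logb 2 ((d : ℝ) * (d + 1) / (lam * d + 1)) := by
  have hd1 : (1:ℝ) < (d:ℝ) := by exact_mod_cast lt_of_lt_of_le one_lt_two hd
  have hd0 : (0:ℝ) < (d:ℝ) := lt_trans one_pos hd1
  have hden : (0:ℝ) < (d:ℝ) ^ 2 - 1 := by nlinarith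
  set c : ℝ := (1 - lam) / ((d : ℝ) ^ 2 - 1) with hc
  set V : ℝ := (lam * d + 1) / ((d : ℝ) * (d + 1)) with hV
  have hlam0 : 0 < lam := lt_of_lt_of_le (by positivity) hl
  have hl' : 1 ≤ lam * (d:ℝ) ^ 2 := by
    rw [div_le_iff₀ (by positivity)] at hl; linarith
  have hk : 0 ≤ lam - c := by
    rw [hc, sub_nonneg, div_le_iff₀ hden]; nlinarith
  have hVform : c + (lam - c) * (1 / d) = V := by
    rw [hc, hV]; field_simp; ring
  -- overlap at unit product vectors
  have hov : ∀ a b : Fin d → ℂ, IsUnitVec a → IsUnitVec b →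
      overlap (isotropic d lam) (biProd a b)
        = c + (lam - c) * (‖∑ j, a j * b j‖ ^ 2 / d) := by
    intro a b ha hb
    rw [overlap_iso (le_trans one_le_two hd) lam a b, ha, hb, ← hc]
    ring
  -- Cauchy–Schwarz bound
  have hcs : ∀ a b : Fin d → ℂ, IsUnitVec a → IsUnitVec b →
      ‖∑ j, a j * b j‖ ^ 2 ≤ 1 := by
    intro a b ha hb
    have h1 : ‖∑ j, a j * b j‖ ≤ ∑ j, ‖a j‖ * ‖b j‖ := by
      refine le_trans (norm_sum_le _ _) ?_
      exact le_of_eq (Finset.sum_congr rfl fun j _ => norm_mul _ _)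
    have h2 : (∑ j, ‖a j‖ * ‖b j‖) ^ 2 ≤ (∑ j, ‖a j‖ ^ 2) * (∑ j, ‖b j‖ ^ 2) :=
      Finset.sum_mul_sq_le_sq_mul_sq _ _ _
    have h3 : (0:ℝ) ≤ ∑ j, ‖a j‖ * ‖b j‖ := Finset.sum_nonneg fun j _ => by positivity
    calc ‖∑ j, a j * b j‖ ^ 2 ≤ (∑ j, ‖a j‖ * ‖b j‖) ^ 2 := by
          exact pow_le_pow_left₀ (norm_nonneg _) h1 2
      _ ≤ (∑ j, ‖a j‖ ^ 2) * (∑ j, ‖b j‖ ^ 2) := h2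
      _ = 1 := by rw [ha, hb]; ring
  -- upper bound
  have hub : ∀ a b : Fin d → ℂ, IsUnitVec a → IsUnitVec b →
      overlap (isotropic d lam) (biProd a b) ≤ V := by
    intro a b ha hb
    rw [hov a b ha hb, ← hVform]
    have : ‖∑ j, a j * b j‖ ^ 2 / d ≤ 1 / d :=
      by gcongr; exact hcs a b ha hb
    nlinarith [mul_le_mul_of_nonneg_left this hk]
  -- value at basis vectors
  have hbasis : ∀ j : Fin d, overlap (isotropic d lam) (biProd (basisVec j) (basisVec j)) = V := by
    intro j
    rw [hov _ _ (basis_unit j) (basis_unit j)]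
    have : ∑ x, basisVec j x * basisVec j x = 1 := by
      simp [basisVec, ite_mul]
    rw [this, ← hVform]
    norm_num
  have hdpos : 0 < d := lt_of_lt_of_le two_pos hd
  set S : Set ℝ := {r : ℝ | ∃ (a : Fin d → ℂ) (b : Fin d → ℂ), IsUnitVec a ∧ IsUnitVec b ∧
      r = overlap (isotropic d lam) (biProd a b)} with hS
  have hmem : V ∈ S := by
    refine ⟨basisVec ⟨0, hdpos⟩, basisVec ⟨0, hdpos⟩, basis_unit _, basis_unit _, ?_⟩
    rw [hbasis]
  have hbd : ∀ r ∈ S, r ≤ V := by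
    rintro r ⟨a, b, ha, hb, rfl⟩
    exact hub a b ha hb
  have hsup : biMaxOverlap (isotropic d lam) = V := by
    rw [biMaxOverlap]
    exact le_antisymm (csSup_le ⟨V, hmem⟩ hbd) (le_csSup ⟨V, hbd⟩ hmem)
  refine ⟨hsup, hbasis, ?_⟩
  have hVpos : 0 < V := by
    rw [hV]; positivity
  have hinv : (d : ℝ) * (d + 1) / (lam * d + 1) = V⁻¹ := by
    rw [hV, inv_div]
  rw [biGm, hsup, hinv, Real.logb_inv]


end Paper
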